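/- For every lattice point a ∈ ℤ⁴ (viewed in ℝ⁴) and every permutation (i,j,k,l) of (1,2,3,4), the four slant tetrahedrons T(a;i,j,k), T(a−e_l;l,i,j), T(a+eᵢ;j,k,l) and T(a+eᵢ+eⱼ;k,l,i) have the same image under π, i.e. π(T(a;i,j,k)) = π(T(a−e_l;l,i,j)) = π(T(a+eᵢ;j,k,l)) = π(T(a+eᵢ+eⱼ;k,l,i)), and their gradients {i,j,k}, {l,i,j}, {j,k,l}, {k,l,i} are pairwise distinct (they exhaust all four 3-element subsets of {1,2,3,4}). -/

import Mathlib

noncomputable section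

/-- Ambient space ℝ⁴. -/
abbrev E4 := EuclideanSpace ℝ (Fin 4)

/-- Standard basis vector eᵢ of ℝ⁴. -/
def ee4 (i : Fin 4) : E4 := EuclideanSpace.single i 1

/-- 𝟙 = e₁ + e₂ + e₃ + e₄. -/
def ones4 : E4 := ∑ i, ee4 i

/-- Orthogonal projection π onto the hyperplane H = {v ∈ ℝ⁴ : v₁+v₂+v₃+v₄ = 0},
    given by π(v) = v − ((v₁+v₂+v₃+v₄)/4)·𝟙. -/
def proj4 (v : E4) : E4 := v - ((∑ i, v i) / 4) • ones4

/-- A lattice point of ℤ⁴ viewed in ℝ⁴. -/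
def toE4 (a : Fin 4 → ℤ) : E4 := WithLp.toLp 2 (fun n => (a n : ℝ))

/-- Slant tetrahedron T(a;i,j,k) = conv{a, a+eᵢ, a+eᵢ+eⱼ, a+eᵢ+eⱼ+e_k}. -/
def slant4 (a : Fin 4 → ℤ) (i j k : Fin 4) : Set E4 :=
  convexHull ℝ {toE4 a, toE4 a + ee4 i, toE4 a + ee4 i + ee4 j,
    toE4 a + ee4 i + ee4 j + ee4 k}

/-- Flat tetrahedron: the image π(T(a;i,j,k)). -/
def flat4 (a : Fin 4 → ℤ) (i j k : Fin 4) : Set E4 := proj4 '' slant4 a i j k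

/-!
The vertices of T(a;i,j,k), followed by a + eᵢ + eⱼ + e_k + e_l = a + 𝟙, form a closed lattice
path once projected, because π kills 𝟙. Each of the other three tetrahedra is spanned by four
consecutive points of the same (periodically continued) path, so its vertices project to the
same four points, listed in a cyclically shifted order. The statement about gradients is a finite
check on `Fin 4`.
-/

lemma proj4_isLinearMap : IsLinearMap ℝ proj4 where
  map_add x y := by
    simp only [proj4, PiLp.add_apply, Finset.sum_add_distrib, add_div, add_smul]
    abel
  map_smul c x := by
    simp only [proj4, PiLp.smul_apply, smul_eq_mul, ← Finset.mul_sum, mul_div_assoc, smul_sub,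
      mul_smul]

lemma ones4_apply (m : Fin 4) : ones4 m = 1 := by
  simp [ones4, ee4]

lemma proj4_ones4 : proj4 ones4 = 0 := by
  simp [proj4, ones4_apply]

lemma proj4_add_ones4 (x : E4) : proj4 (x + ones4) = proj4 x := by
  rw [proj4_isLinearMap.map_add, proj4_ones4, add_zero]

lemma ee4_add_ee4_add_ee4_add_ee4 {i j k l : Fin 4} (hij : i ≠ j) (hik : i ≠ k) (hil : i ≠ l)
    (hjk : j ≠ k) (hjl : j ≠ l) (hkl : k ≠ l) :
    ee4 i + ee4 j + ee4 k + ee4 l = ones4 := by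
  have huniv : ({i, j, k, l} : Finset (Fin 4)) = Finset.univ := by
    apply Finset.eq_univ_of_card
    simp [Finset.card_insert_of_notMem, hij, hik, hil, hjk, hjl, hkl]
  rw [ones4, ← huniv, Finset.sum_insert (by simp [hij, hik, hil]),
    Finset.sum_insert (by simp [hjk, hjl]), Finset.sum_pair hkl]
  abel

lemma toE4_add_single (a : Fin 4 → ℤ) (i : Fin 4) :
    toE4 (a + Pi.single i 1) = toE4 a + ee4 i := by
  ext n
  by_cases h : n = i <;> simp [toE4, ee4, Pi.single_apply, h]

lemma flat4_eq_convexHull (a : Fin 4 → ℤ) (i j k : Fin 4) :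
    flat4 a i j k = convexHull ℝ {proj4 (toE4 a), proj4 (toE4 a + ee4 i),
      proj4 (toE4 a + ee4 i + ee4 j), proj4 (toE4 a + ee4 i + ee4 j + ee4 k)} := by
  simp only [flat4, slant4, proj4_isLinearMap.image_convexHull, Set.image_insert_eq,
    Set.image_singleton]

lemma flat4_add_single {a : Fin 4 → ℤ} {i j k l : Fin 4} (hij : i ≠ j) (hik : i ≠ k)
    (hil : i ≠ l) (hjk : j ≠ k) (hjl : j ≠ l) (hkl : k ≠ l) :
    flat4 (a + Pi.single i 1) j k l = flat4 a i j k := by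
  have hlast : proj4 (toE4 a + ee4 i + ee4 j + ee4 k + ee4 l) = proj4 (toE4 a) := by
    rw [← proj4_add_ones4 (toE4 a), ← ee4_add_ee4_add_ee4_add_ee4 hij hik hil hjk hjl hkl]
    abel_nf
  rw [flat4_eq_convexHull, flat4_eq_convexHull, toE4_add_single, hlast]
  congr 1
  ext v
  simp only [Set.mem_insert_iff, Set.mem_singleton_iff]
  tauto

lemma gradients_of_distinct : ∀ i j k l : Fin 4, i ≠ j → i ≠ k → i ≠ l → j ≠ k → j ≠ l → k ≠ l →
    ({i, j, k} : Finset (Fin 4)) ≠ {l, i, j} ∧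
    ({i, j, k} : Finset (Fin 4)) ≠ {j, k, l} ∧
    ({i, j, k} : Finset (Fin 4)) ≠ {k, l, i} ∧
    ({l, i, j} : Finset (Fin 4)) ≠ {j, k, l} ∧
    ({l, i, j} : Finset (Fin 4)) ≠ {k, l, i} ∧
    ({j, k, l} : Finset (Fin 4)) ≠ {k, l, i} ∧
    ∀ s : Finset (Fin 4),
      (s = {i, j, k} ∨ s = {l, i, j} ∨ s = {j, k, l} ∨ s = {k, l, i}) ↔ s.card = 3 := by
  decide

/-- the four slant tetrahedrons T(a;i,j,k), T(a−e_l;l,i,j),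
T(a+eᵢ;j,k,l), T(a+eᵢ+eⱼ;k,l,i) have the same image under π, and their
gradients are pairwise distinct, exhausting all four 3-element subsets of
{1,2,3,4}. -/
theorem stmt8 (a : Fin 4 → ℤ) (i j k l : Fin 4)
    (hij : i ≠ j) (hik : i ≠ k) (hil : i ≠ l)
    (hjk : j ≠ k) (hjl : j ≠ l) (hkl : k ≠ l) :
    flat4 a i j k = flat4 (a - Pi.single l 1) l i j ∧
    flat4 a i j k = flat4 (a + Pi.single i 1) j k l ∧
    flat4 a i j k = flat4 (a + Pi.single i 1 + Pi.single j 1) k l i ∧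
    ({i, j, k} : Finset (Fin 4)) ≠ {l, i, j} ∧
    ({i, j, k} : Finset (Fin 4)) ≠ {j, k, l} ∧
    ({i, j, k} : Finset (Fin 4)) ≠ {k, l, i} ∧
    ({l, i, j} : Finset (Fin 4)) ≠ {j, k, l} ∧
    ({l, i, j} : Finset (Fin 4)) ≠ {k, l, i} ∧
    ({j, k, l} : Finset (Fin 4)) ≠ {k, l, i} ∧
    ({({i, j, k} : Finset (Fin 4)), {l, i, j}, {j, k, l}, {k, l, i}} : Set (Finset (Fin 4))) =
      {s : Finset (Fin 4) | s.card = 3} := by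
  obtain ⟨h₁, h₂, h₃, h₄, h₅, h₆, hcard⟩ := gradients_of_distinct i j k l hij hik hil hjk hjl hkl
  have shift₁ : flat4 (a + Pi.single i 1) j k l = flat4 a i j k :=
    flat4_add_single hij hik hil hjk hjl hkl
  have shift₂ : flat4 (a + Pi.single i 1 + Pi.single j 1) k l i =
      flat4 (a + Pi.single i 1) j k l :=
    flat4_add_single hjk hjl hij.symm hkl hik.symm hil.symm
  have shift₀ : flat4 (a - Pi.single l 1 + Pi.single l 1) i j k = flat4 (a - Pi.single l 1) l i j :=
    flat4_add_single hil.symm hjl.symm hkl.symm hij hik hjk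
  rw [sub_add_cancel] at shift₀
  refine ⟨shift₀, shift₁.symm, (shift₂.trans shift₁).symm, h₁, h₂, h₃, h₄, h₅, h₆, ?_⟩
  ext s
  simpa only [Set.mem_insert_iff, Set.mem_singleton_iff, Set.mem_ofPred_eq] using hcard s
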